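/- Let G and H be finite graphs, each of which is a general corona of a tree, say G = T₁∘𝒫₁ and H = T₂∘𝒫₂ for trees T₁, T₂ and vertex neighborhood partitions 𝒫₁, 𝒫₂. If G and H share exactly one vertex, and this common vertex is an external vertex of both G and H, then the union G ∪ H is a general corona of a tree. -/

import Mathlib

open SimpleGraph

namespace GenCorona

universe u

/-- A vertex neighborhood partition of a graph `G`: for every vertex `v`, a partition
of the open neighborhood `N_G(v)` into nonempty sets. -/
structure NbhdPartition {V : Type u} (G : SimpleGraph V) where
  part : V → Set (Set V)
  nonempty : ∀ v : V, ∀ A ∈ part v, A.Nonempty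
  subset_nbhd : ∀ v : V, ∀ A ∈ part v, A ⊆ G.neighborSet v
  covers : ∀ v : V, ∀ u ∈ G.neighborSet v, ∃ A ∈ part v, u ∈ A
  eq_of_inter : ∀ v : V, ∀ A ∈ part v, ∀ B ∈ part v, (A ∩ B).Nonempty → A = B

variable {V : Type u}

/-- The vertex type of the general corona `G ∘ 𝒫`: external vertices `(v,1)` are encoded
as `Sum.inl v`, internal vertices `(v,A)` (with `A ∈ 𝒫(v)`) as `Sum.inr ⟨(v,A), _⟩`. -/
abbrev CoronaVert (G : SimpleGraph V) (P : NbhdPartition G) : Type u :=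
  V ⊕ {p : V × Set V // p.2 ∈ P.part p.1}

/-- The general corona `G ∘ 𝒫`. -/
def corona (G : SimpleGraph V) (P : NbhdPartition G) : SimpleGraph (CoronaVert G P) :=
  SimpleGraph.fromRel fun x y =>
    match x, y with
    | Sum.inl v, Sum.inr p => v = p.val.1
    | Sum.inr p, Sum.inr q =>
        G.Adj p.val.1 q.val.1 ∧ q.val.1 ∈ p.val.2 ∧ p.val.1 ∈ q.val.2
    | _, _ => False

/-- The set of external vertices of the general corona. -/
def Ext (G : SimpleGraph V) (P : NbhdPartition G) : Set (CoronaVert G P) :=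
  Set.range Sum.inl

/-- A graph is a general corona of a tree if it is isomorphic to `T ∘ 𝒫` for some finite
tree `T` and some vertex neighborhood partition `𝒫` of `T`. -/
def IsGeneralCoronaOfTree {W : Type*} (H : SimpleGraph W) : Prop :=
  ∃ (n : ℕ) (T : SimpleGraph (Fin n)) (P : NbhdPartition T),
    T.IsTree ∧ Nonempty (H ≃g corona T P)

/-- A graph `H` is a general corona of a tree with external vertex set `E`. -/
def IsGenCoronaWithExt {W : Type*} (H : SimpleGraph W) (E : Set W) : Prop :=
  ∃ (n : ℕ) (T : SimpleGraph (Fin n)) (P : NbhdPartition T),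
    T.IsTree ∧ ∃ f : H ≃g corona T P, E = ⇑f ⁻¹' Ext T P

/-- `D` is a dominating set of `G`. -/
def IsDominating (G : SimpleGraph V) (D : Set V) : Prop :=
  ∀ v ∉ D, ∃ u ∈ D, G.Adj v u

/-- `S` is a 2-packing of `G`: any two distinct vertices of `S` are at distance
greater than 2 (where the extended distance of unreachable vertices is `⊤`). -/
def Is2Packing (G : SimpleGraph V) (S : Set V) : Prop :=
  ∀ u ∈ S, ∀ v ∈ S, u ≠ v → 2 < G.edist u v

/-- A leaf is a vertex of degree 1, i.e. with exactly one neighbor. -/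
def IsLeaf (G : SimpleGraph V) (v : V) : Prop :=
  (G.neighborSet v).ncard = 1

/-- The domination number: the minimum size of a dominating set. -/
noncomputable def dominationNumber (G : SimpleGraph V) : ℕ :=
  sInf {n : ℕ | ∃ D : Set V, IsDominating G D ∧ D.ncard = n}

/-- The graph obtained from `G` by subdividing every edge in `F` (each once):
for each `e ∈ F` a new vertex `Sum.inr e` replaces the edge `e` by a path of length two. -/
def subdivide (G : SimpleGraph V) (F : Set (Sym2 V)) : SimpleGraph (V ⊕ F) :=
  SimpleGraph.fromRel fun x y =>
    match x, y with
    | Sum.inl u, Sum.inl v => G.Adj u v ∧ s(u, v) ∉ F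
    | Sum.inl u, Sum.inr e => u ∈ e.val
    | _, _ => False

/-- The domination subdivision number `sd(G)`: the minimum number of edges which must be
subdivided (each edge at most once) in order to increase the domination number. -/
noncomputable def sd (G : SimpleGraph V) : ℕ :=
  sInf {k : ℕ | ∃ F : Set (Sym2 V), F ⊆ G.edgeSet ∧ F.ncard = k ∧
    dominationNumber G < dominationNumber (subdivide G F)}

/-- The corona `G ∘ K₁`: attach one new pendant vertex `Sum.inr v` to each vertex
`Sum.inl v` of `G`. -/
def coronaK1 (G : SimpleGraph V) : SimpleGraph (V ⊕ V) :=
  SimpleGraph.fromRel fun x y =>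
    match x, y with
    | Sum.inl u, Sum.inl w => G.Adj u w
    | Sum.inl u, Sum.inr w => u = w
    | _, _ => False

/-- The 2-subdivision `S₂(G)`: every edge `uv` is replaced by a path `(u, x₁, x₂, v)`;
the new vertex `Sum.inr ⟨(u,v), _⟩` is the subdivision vertex adjacent to `u`. -/
def twoSubdivision (G : SimpleGraph V) : SimpleGraph (V ⊕ {p : V × V // G.Adj p.1 p.2}) :=
  SimpleGraph.fromRel fun x y =>
    match x, y with
    | Sum.inl u, Sum.inr p => u = p.val.1
    | Sum.inr p, Sum.inr q => p.val.1 = q.val.2 ∧ p.val.2 = q.val.1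
    | _, _ => False

/-- `𝒫'` is a refinement of `𝒫`. -/
def Refines {G : SimpleGraph V} (P' P : NbhdPartition G) : Prop :=
  ∀ v : V, ∀ A ∈ P'.part v, ∃ B ∈ P.part v, A ⊆ B

/-- The graph obtained by contracting the two vertices `x` and `y` of `G` to the single
vertex `x` (the vertex `y` is removed, and `x` becomes adjacent to all former
neighbors of `y`). -/
def contractPair {W : Type*} (G : SimpleGraph W) (x y : W) :
    SimpleGraph {w : W // w ≠ y} :=
  SimpleGraph.fromRel fun a b =>
    G.Adj a.val b.val ∨ (a.val = x ∧ G.Adj y b.val) ∨ (b.val = x ∧ G.Adj a.val y)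

/-- The graph obtained from `G` by attaching a path `(x, y, z)` (encoded as
`Sum.inr 0, Sum.inr 1, Sum.inr 2`) to the vertex `v` via the edge `v x`. -/
def attachPath3 {W : Type*} (G : SimpleGraph W) (v : W) : SimpleGraph (W ⊕ Fin 3) :=
  SimpleGraph.fromRel fun a b =>
    match a, b with
    | Sum.inl u, Sum.inl w => G.Adj u w
    | Sum.inl u, Sum.inr i => u = v ∧ i = 0
    | Sum.inr i, Sum.inr j => (i = 0 ∧ j = 1) ∨ (i = 1 ∧ j = 2)
    | _, _ => False

/-- The graph obtained from `G` by attaching a path `(x, y)` (encoded as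
`Sum.inr 0, Sum.inr 1`) to the vertex `v` via the edge `v x`. -/
def attachPath2 {W : Type*} (G : SimpleGraph W) (v : W) : SimpleGraph (W ⊕ Fin 2) :=
  SimpleGraph.fromRel fun a b =>
    match a, b with
    | Sum.inl u, Sum.inl w => G.Adj u w
    | Sum.inl u, Sum.inr i => u = v ∧ i = 0
    | Sum.inr i, Sum.inr j => i = 0 ∧ j = 1
    | _, _ => False

/-- The family `𝓕` of labeled trees; the label of a vertex is `A` when it belongs to the
distinguished set `L`, and `B` otherwise.  The family contains the labeled path `P₄`
(leaves labeled `A`, support vertices labeled `B`) and is closed under the two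
attachment operations. -/
inductive LabF : ∀ {W : Type}, SimpleGraph W → Set W → Prop where
  | base : LabF (SimpleGraph.pathGraph 4) ({0, 3} : Set (Fin 4))
  | opA {W : Type} {G : SimpleGraph W} {L : Set W} (v : W) :
      LabF G L → v ∈ L →
        LabF (attachPath3 G v) (Sum.inl '' L ∪ {Sum.inr (2 : Fin 3)})
  | opB {W : Type} {G : SimpleGraph W} {L : Set W} (v : W) :
      LabF G L → v ∉ L →
        LabF (attachPath2 G v) (Sum.inl '' L ∪ {Sum.inr (1 : Fin 2)})

/-- A tree `T` belongs to the family `𝓕` if it admits a labeling constructed by the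
above rules, i.e. it is isomorphic to a member of the inductively generated family. -/
def MemF {W : Type*} (T : SimpleGraph W) : Prop :=
  ∃ (W' : Type) (G : SimpleGraph W') (L : Set W'), LabF G L ∧ Nonempty (T ≃g G)

/-! Write `G ≅ T₁ ∘ 𝒫₁` and `H ≅ T₂ ∘ 𝒫₂`, the common vertex being `(v₁,1)` resp. `(v₂,1)`.
The wedge `T` of `T₁` and `T₂` obtained by identifying `v₁` with `v₂` is again a tree: it is
connected, and it has one vertex fewer than `T₁` and `T₂` together but as many edges. At the
identified vertex the parts of `𝒫₁(v₁)` and `𝒫₂(v₂)` lie in disjoint neighbourhoods, so the two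
partitions glue to a neighbourhood partition `𝒫` of `T`. Both `T₁ ∘ 𝒫₁` and `T₂ ∘ 𝒫₂` embed into
`T ∘ 𝒫` as induced subgraphs that meet only in the external vertex of the identified vertex and
together contain every vertex and every edge; hence `G ∪ H ≅ T ∘ 𝒫`.

The wedge is realised on `Fin n` through two embeddings `ι₁`, `ι₂` of the vertex types whose
ranges cover `Fin n` and meet exactly in `ι₁ v₁ = ι₂ v₂`; it is `T₁.map ι₁ ⊔ T₂.map ι₂`. -/

section Corona

variable {V' : Type*} {G : SimpleGraph V} {P : NbhdPartition G}

@[simp] lemma corona_adj_inl_inl {v w : V} : ¬ (corona G P).Adj (Sum.inl v) (Sum.inl w) := by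
  simp [corona]

@[simp] lemma corona_adj_inl_inr {v : V} {p : {p : V × Set V // p.2 ∈ P.part p.1}} :
    (corona G P).Adj (Sum.inl v) (Sum.inr p) ↔ v = p.val.1 := by
  simp [corona]

@[simp] lemma corona_adj_inr_inl {v : V} {p : {p : V × Set V // p.2 ∈ P.part p.1}} :
    (corona G P).Adj (Sum.inr p) (Sum.inl v) ↔ v = p.val.1 := by
  simp [corona]

@[simp] lemma corona_adj_inr_inr {p q : {p : V × Set V // p.2 ∈ P.part p.1}} :
    (corona G P).Adj (Sum.inr p) (Sum.inr q) ↔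
      G.Adj p.val.1 q.val.1 ∧ q.val.1 ∈ p.val.2 ∧ p.val.1 ∈ q.val.2 := by
  simp only [corona, fromRel_adj, ne_eq, Sum.inr.injEq]
  constructor
  · rintro ⟨-, h | ⟨hadj, hq, hp⟩⟩
    · exact h
    · exact ⟨hadj.symm, hp, hq⟩
  · intro h
    exact ⟨fun hpq => h.1.ne (by rw [hpq]), Or.inl h⟩

def coronaEmbedding {G' : SimpleGraph V'} {P' : NbhdPartition G'} (e : G ↪g G')
    (he : ∀ v, ∀ A ∈ P.part v, ⇑e '' A ∈ P'.part (e v)) : corona G P ↪g corona G' P' where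
  toFun := Sum.map e fun p => ⟨(e p.val.1, ⇑e '' p.val.2), he _ _ p.prop⟩
  inj' := Sum.map_injective.mpr ⟨e.injective, fun p q h => by
    simp only [Subtype.mk.injEq, Prod.mk.injEq] at h
    exact Subtype.ext (Prod.ext (e.injective h.1) (Set.image_injective.mpr e.injective h.2))⟩
  map_rel_iff' := by
    rintro (v | p) (w | q) <;>
      simp [e.injective.eq_iff, e.injective.mem_set_image]

end Corona

section Wedge

variable {V₁ V₂ X : Type*} {T₁ : SimpleGraph V₁} {T₂ : SimpleGraph V₂} {ι₁ : V₁ ↪ X} {ι₂ : V₂ ↪ X}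
  {v₁ : V₁} {v₂ : V₂}

lemma eq_and_eq_of_apply_eq_apply (hmeet : ∀ a b, ι₁ a = ι₂ b → a = v₁ ∧ b = v₂)
    {a a' : V₁} {b b' : V₂} (h : ι₁ a = ι₂ b) (h' : ι₁ a' = ι₂ b') : a = a' ∧ b = b' := by
  obtain ⟨rfl, rfl⟩ := hmeet _ _ h
  obtain ⟨rfl, rfl⟩ := hmeet _ _ h'
  exact ⟨rfl, rfl⟩

def wedgeEmbeddingLeft (hmeet : ∀ a b, ι₁ a = ι₂ b → a = v₁ ∧ b = v₂) :
    T₁ ↪g T₁.map ι₁ ⊔ T₂.map ι₂ where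
  toEmbedding := ι₁
  map_rel_iff' := by
    intro a a'
    rw [sup_adj, map_adj_apply, or_iff_left_iff_imp, map_adj]
    rintro ⟨b, b', hadj, h, h'⟩
    exact (hadj.ne (eq_and_eq_of_apply_eq_apply hmeet h.symm h'.symm).2).elim

def wedgeEmbeddingRight (hmeet : ∀ a b, ι₁ a = ι₂ b → a = v₁ ∧ b = v₂) :
    T₂ ↪g T₁.map ι₁ ⊔ T₂.map ι₂ where
  toEmbedding := ι₂
  map_rel_iff' := by
    intro b b'
    rw [sup_adj, map_adj_apply, or_iff_right_iff_imp, map_adj]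
    rintro ⟨a, a', hadj, h, h'⟩
    exact (hadj.ne (eq_and_eq_of_apply_eq_apply hmeet h h').1).elim

variable (ι₁ ι₂) in
def wedgePartition (P₁ : NbhdPartition T₁) (P₂ : NbhdPartition T₂)
    (hmeet : ∀ a b, ι₁ a = ι₂ b → a = v₁ ∧ b = v₂) : NbhdPartition (T₁.map ι₁ ⊔ T₂.map ι₂) where
  part x := {S | ∃ a, ι₁ a = x ∧ ∃ A ∈ P₁.part a, ι₁ '' A = S} ∪
    {S | ∃ b, ι₂ b = x ∧ ∃ B ∈ P₂.part b, ι₂ '' B = S}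
  nonempty := by
    rintro x S (⟨a, -, A, hA, rfl⟩ | ⟨b, -, B, hB, rfl⟩)
    · exact (P₁.nonempty a A hA).image ι₁
    · exact (P₂.nonempty b B hB).image ι₂
  subset_nbhd := by
    rintro x S (⟨a, rfl, A, hA, rfl⟩ | ⟨b, rfl, B, hB, rfl⟩) _ ⟨c, hc, rfl⟩
    · exact (wedgeEmbeddingLeft hmeet).map_adj_iff.mpr (P₁.subset_nbhd a A hA hc)
    · exact (wedgeEmbeddingRight hmeet).map_adj_iff.mpr (P₂.subset_nbhd b B hB hc)
  covers := by
    intro x y hxy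
    rw [mem_neighborSet, sup_adj, map_adj, map_adj] at hxy
    rcases hxy with ⟨a, a', hadj, rfl, rfl⟩ | ⟨b, b', hadj, rfl, rfl⟩
    · obtain ⟨A, hA, ha'⟩ := P₁.covers a a' hadj
      exact ⟨ι₁ '' A, Or.inl ⟨a, rfl, A, hA, rfl⟩, Set.mem_image_of_mem ι₁ ha'⟩
    · obtain ⟨B, hB, hb'⟩ := P₂.covers b b' hadj
      exact ⟨ι₂ '' B, Or.inr ⟨b, rfl, B, hB, rfl⟩, Set.mem_image_of_mem ι₂ hb'⟩
  eq_of_inter := by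
    rintro x S (⟨a, rfl, A, hA, rfl⟩ | ⟨b, rfl, B, hB, rfl⟩) S'
      (⟨a', ha', A', hA', rfl⟩ | ⟨b', hb', B', hB', rfl⟩) hne
    · obtain rfl := ι₁.injective ha'
      rw [← Set.image_inter ι₁.injective, Set.image_nonempty] at hne
      rw [P₁.eq_of_inter _ A hA A' hA' hne]
    · obtain ⟨_, ⟨c, -, rfl⟩, d, hd, hdc⟩ := hne
      have hadj : T₂.Adj b' d := P₂.subset_nbhd b' B' hB' hd
      exact (hadj.ne (eq_and_eq_of_apply_eq_apply hmeet hb'.symm hdc.symm).2).elim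
    · obtain ⟨_, ⟨d, hd, rfl⟩, c, -, hcd⟩ := hne
      have hadj : T₂.Adj b d := P₂.subset_nbhd b B hB hd
      exact (hadj.ne (eq_and_eq_of_apply_eq_apply hmeet ha' hcd).2).elim
    · obtain rfl := ι₂.injective hb'
      rw [← Set.image_inter ι₂.injective, Set.image_nonempty] at hne
      rw [P₂.eq_of_inter _ B hB B' hB' hne]

end Wedge

section CoronaWedge

variable {V₁ V₂ X : Type*} {T₁ : SimpleGraph V₁} {T₂ : SimpleGraph V₂} {ι₁ : V₁ ↪ X} {ι₂ : V₂ ↪ X}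
  {v₁ : V₁} {v₂ : V₂} (P₁ : NbhdPartition T₁) (P₂ : NbhdPartition T₂)
  (hmeet : ∀ a b, ι₁ a = ι₂ b → a = v₁ ∧ b = v₂)

def coronaWedgeLeft :
    corona T₁ P₁ ↪g corona (T₁.map ι₁ ⊔ T₂.map ι₂) (wedgePartition ι₁ ι₂ P₁ P₂ hmeet) :=
  coronaEmbedding (wedgeEmbeddingLeft hmeet) fun a A hA => Or.inl ⟨a, rfl, A, hA, rfl⟩

def coronaWedgeRight :
    corona T₂ P₂ ↪g corona (T₁.map ι₁ ⊔ T₂.map ι₂) (wedgePartition ι₁ ι₂ P₁ P₂ hmeet) :=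
  coronaEmbedding (wedgeEmbeddingRight hmeet) fun b B hB => Or.inr ⟨b, rfl, B, hB, rfl⟩

variable {P₁ P₂ hmeet}

lemma eq_inl_of_coronaWedgeLeft_eq_right {x : CoronaVert T₁ P₁} {y : CoronaVert T₂ P₂}
    (h : coronaWedgeLeft P₁ P₂ hmeet x = coronaWedgeRight P₁ P₂ hmeet y) : x = Sum.inl v₁ := by
  rcases x with a | p <;> rcases y with b | q
  · have hab : ι₁ a = ι₂ b := Sum.inl.inj h
    rw [(hmeet a b hab).1]
  · exact (Sum.inl_ne_inr h).elim
  · exact (Sum.inr_ne_inl h).elim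
  · obtain ⟨hpq, hPQ⟩ : ι₁ p.1.1 = ι₂ q.1.1 ∧ ι₁ '' p.1.2 = ι₂ '' q.1.2 :=
      Prod.mk.inj (congrArg Subtype.val (Sum.inr.inj h))
    obtain ⟨d, hd⟩ := P₂.nonempty _ _ q.2
    obtain ⟨c, -, hcd⟩ : ι₂ d ∈ ι₁ '' p.1.2 := hPQ ▸ Set.mem_image_of_mem ι₂ hd
    have hadj : T₂.Adj q.1.1 d := P₂.subset_nbhd _ _ q.2 hd
    exact (hadj.ne (eq_and_eq_of_apply_eq_apply hmeet hpq hcd).2).elim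

lemma eq_inl_or_eq_inl_of_adj_coronaWedgeLeft_right {x : CoronaVert T₁ P₁}
    {y : CoronaVert T₂ P₂}
    (h : (corona _ _).Adj (coronaWedgeLeft P₁ P₂ hmeet x) (coronaWedgeRight P₁ P₂ hmeet y)) :
    x = Sum.inl v₁ ∨ y = Sum.inl v₂ := by
  rcases x with a | p <;> rcases y with b | q
  · exact (corona_adj_inl_inl h).elim
  · have hab : ι₁ a = ι₂ q.1.1 := corona_adj_inl_inr.mp h
    rw [(hmeet _ _ hab).1]
    exact Or.inl rfl
  · have hab : ι₂ b = ι₁ p.1.1 := corona_adj_inr_inl.mp h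
    rw [(hmeet _ _ hab.symm).2]
    exact Or.inr rfl
  · obtain ⟨-, ⟨c, -, hcq⟩, d, hd, hdp⟩ := corona_adj_inr_inr.mp h
    have hadj : T₂.Adj q.1.1 d := P₂.subset_nbhd _ _ q.2 hd
    exact (hadj.ne (eq_and_eq_of_apply_eq_apply hmeet hcq hdp.symm).2).elim

lemma coronaWedgeLeft_or_right_surjective (hcover : ∀ x, (∃ a, ι₁ a = x) ∨ ∃ b, ι₂ b = x)
    (z : CoronaVert (T₁.map ι₁ ⊔ T₂.map ι₂) (wedgePartition ι₁ ι₂ P₁ P₂ hmeet)) :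
    (∃ x, coronaWedgeLeft P₁ P₂ hmeet x = z) ∨ ∃ y, coronaWedgeRight P₁ P₂ hmeet y = z := by
  rcases z with x | ⟨⟨x, S⟩, hS⟩
  · rcases hcover x with ⟨a, rfl⟩ | ⟨b, rfl⟩
    exacts [Or.inl ⟨Sum.inl a, rfl⟩, Or.inr ⟨Sum.inl b, rfl⟩]
  dsimp only at hS
  rcases hS with ⟨a, rfl, A, hA, rfl⟩ | ⟨b, rfl, B, hB, rfl⟩
  · exact Or.inl ⟨Sum.inr ⟨(a, A), hA⟩, rfl⟩
  · exact Or.inr ⟨Sum.inr ⟨(b, B), hB⟩, rfl⟩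

end CoronaWedge

section WedgeTree

variable {V₁ V₂ X : Type*} {T₁ : SimpleGraph V₁} {T₂ : SimpleGraph V₂} {ι₁ : V₁ ↪ X} {ι₂ : V₂ ↪ X}
  {v₁ : V₁} {v₂ : V₂}

lemma exists_fin_wedge [Finite V₁] [Finite V₂] (v₁ : V₁) (v₂ : V₂) :
    ∃ (n : ℕ) (ι₁ : V₁ ↪ Fin n) (ι₂ : V₂ ↪ Fin n), ι₁ v₁ = ι₂ v₂ ∧
      (∀ a b, ι₁ a = ι₂ b → a = v₁ ∧ b = v₂) ∧ ∀ x, (∃ a, ι₁ a = x) ∨ ∃ b, ι₂ b = x := by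
  classical
  let j : V₂ → V₁ ⊕ {b // b ≠ v₂} := fun b => if h : b = v₂ then .inl v₁ else .inr ⟨b, h⟩
  have hj : j.Injective := by
    intro b b' h
    by_cases hb : b = v₂ <;> by_cases hb' : b' = v₂ <;> simp_all [j]
  let σ := Finite.equivFin (V₁ ⊕ {b // b ≠ v₂})
  refine ⟨_, Function.Embedding.inl.trans σ.toEmbedding, ⟨σ ∘ j, σ.injective.comp hj⟩, ?_, ?_, ?_⟩
  · simp [j]
  · intro a b h
    by_cases hb : b = v₂ <;> simp_all [j]
  · intro x
    obtain ⟨a | ⟨b, hb⟩, rfl⟩ := σ.surjective x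
    · exact Or.inl ⟨a, rfl⟩
    · exact Or.inr ⟨b, by simp [j, hb]⟩

lemma connected_sup_map (h₁ : T₁.Connected) (h₂ : T₂.Connected) (h0 : ι₁ v₁ = ι₂ v₂)
    (hcover : ∀ x, (∃ a, ι₁ a = x) ∨ ∃ b, ι₂ b = x) : (T₁.map ι₁ ⊔ T₂.map ι₂).Connected := by
  rw [connected_iff_exists_forall_reachable]
  refine ⟨ι₁ v₁, fun x => ?_⟩
  rcases hcover x with ⟨a, rfl⟩ | ⟨b, rfl⟩
  · exact ((h₁.preconnected v₁ a).map (Embedding.map ι₁ T₁).toHom).mono le_sup_left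
  · rw [h0]
    exact ((h₂.preconnected v₂ b).map (Embedding.map ι₂ T₂).toHom).mono le_sup_right

lemma ncard_edgeSet_sup_map [Finite X] (hmeet : ∀ a b, ι₁ a = ι₂ b → a = v₁ ∧ b = v₂) :
    (T₁.map ι₁ ⊔ T₂.map ι₂).edgeSet.ncard = T₁.edgeSet.ncard + T₂.edgeSet.ncard := by
  have hdisj : Disjoint (T₁.map ι₁).edgeSet (T₂.map ι₂).edgeSet := by
    rw [edgeSet_map, edgeSet_map, Set.disjoint_left]
    rintro _ ⟨e, he, rfl⟩ ⟨e', -, he'⟩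
    rw [Function.Embedding.sym2Map_apply, Function.Embedding.sym2Map_apply] at he'
    induction e using Sym2.ind with
    | h a a' =>
      have hmem : ∀ c ∈ s(a, a'), ∃ b, ι₁ c = ι₂ b := fun c hc => by
        have hc' : ι₁ c ∈ Sym2.map ι₂ e' := he' ▸ Sym2.mem_map.mpr ⟨c, hc, rfl⟩
        obtain ⟨b, -, hb⟩ := Sym2.mem_map.mp hc'
        exact ⟨b, hb.symm⟩
      obtain ⟨b, hb⟩ := hmem a (Sym2.mem_mk_left a a')
      obtain ⟨b', hb'⟩ := hmem a' (Sym2.mem_mk_right a a')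
      exact (mem_edgeSet T₁).mp he |>.ne (eq_and_eq_of_apply_eq_apply hmeet hb hb').1
  rw [edgeSet_sup, Set.ncard_union_eq hdisj, edgeSet_map, edgeSet_map,
    Set.ncard_image_of_injective _ ι₁.sym2Map.injective,
    Set.ncard_image_of_injective _ ι₂.sym2Map.injective]

lemma card_add_one_eq_of_wedge [Finite X] (h0 : ι₁ v₁ = ι₂ v₂)
    (hmeet : ∀ a b, ι₁ a = ι₂ b → a = v₁ ∧ b = v₂)
    (hcover : ∀ x, (∃ a, ι₁ a = x) ∨ ∃ b, ι₂ b = x) :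
    Nat.card X + 1 = Nat.card V₁ + Nat.card V₂ := by
  have hunion : Set.range ι₁ ∪ Set.range ι₂ = Set.univ :=
    Set.eq_univ_of_forall hcover
  have hinter : Set.range ι₁ ∩ Set.range ι₂ = {ι₁ v₁} := by
    ext x
    constructor
    · rintro ⟨⟨a, rfl⟩, b, hb⟩
      rw [(hmeet a b hb.symm).1]
      rfl
    · rintro rfl
      exact ⟨⟨v₁, rfl⟩, v₂, h0.symm⟩
  rw [← Set.ncard_univ, ← hunion, ← Set.ncard_range_of_injective ι₁.injective,
    ← Set.ncard_range_of_injective ι₂.injective, ← Set.ncard_union_add_ncard_inter, hinter,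
    Set.ncard_singleton]

lemma isTree_sup_map [Finite X] (h₁ : T₁.IsTree) (h₂ : T₂.IsTree) (h0 : ι₁ v₁ = ι₂ v₂)
    (hmeet : ∀ a b, ι₁ a = ι₂ b → a = v₁ ∧ b = v₂)
    (hcover : ∀ x, (∃ a, ι₁ a = x) ∨ ∃ b, ι₂ b = x) : (T₁.map ι₁ ⊔ T₂.map ι₂).IsTree := by
  have := Finite.of_injective ι₁ ι₁.injective
  have := Finite.of_injective ι₂ ι₂.injective
  rw [isTree_iff_connected_and_card] at h₁ h₂ ⊢
  refine ⟨connected_sup_map h₁.1 h₂.1 h0 hcover, ?_⟩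
  have hcard := card_add_one_eq_of_wedge h0 hmeet hcover
  rw [Nat.card_coe_set_eq] at h₁ h₂ ⊢
  rw [ncard_edgeSet_sup_map hmeet]
  omega

end WedgeTree

section GluedMap

variable {W Z : Type*} {SG SH : Set W} {w0 : W}

open Classical in
noncomputable def gluedMap (hcover : SG ∪ SH = Set.univ) (φ : SG → Z) (ψ : SH → Z) (w : W) : Z :=
  if h : w ∈ SG then φ ⟨w, h⟩ else ψ ⟨w, (Set.eq_univ_iff_forall.mp hcover w).resolve_left h⟩

lemma gluedMap_of_mem_left (hcover : SG ∪ SH = Set.univ) (φ : SG → Z) (ψ : SH → Z) {w : W}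
    (h : w ∈ SG) : gluedMap hcover φ ψ w = φ ⟨w, h⟩ :=
  dif_pos h

lemma gluedMap_of_mem_right (hcover : SG ∪ SH = Set.univ) (hinter : SG ∩ SH = {w0})
    {φ : SG → Z} {ψ : SH → Z} (hw0G : w0 ∈ SG) (hw0H : w0 ∈ SH)
    (h0 : φ ⟨w0, hw0G⟩ = ψ ⟨w0, hw0H⟩) {w : W} (h : w ∈ SH) :
    gluedMap hcover φ ψ w = ψ ⟨w, h⟩ := by
  by_cases hG : w ∈ SG
  · obtain rfl : w = w0 := (hinter ▸ Set.mem_inter hG h : w ∈ ({w0} : Set W))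
    rw [gluedMap_of_mem_left hcover φ ψ hG, h0]
  · exact dif_neg hG

lemma nonempty_iso_of_embeddings {U : SimpleGraph W} {Y : SimpleGraph Z}
    (hw0G : w0 ∈ SG) (hw0H : w0 ∈ SH) (hcover : SG ∪ SH = Set.univ)
    (hinter : SG ∩ SH = {w0})
    (hedges : ∀ a b, U.Adj a b → (a ∈ SG ∧ b ∈ SG) ∨ (a ∈ SH ∧ b ∈ SH))
    (φ : U.induce SG ↪g Y) (ψ : U.induce SH ↪g Y) (h0 : φ ⟨w0, hw0G⟩ = ψ ⟨w0, hw0H⟩)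
    (hmeet : ∀ x y, φ x = ψ y → (x : W) = w0)
    (hadj : ∀ x y, Y.Adj (φ x) (ψ y) → (x : W) = w0 ∨ (y : W) = w0)
    (hsurj : ∀ z, (∃ x, φ x = z) ∨ ∃ y, ψ y = z) : Nonempty (U ≃g Y) := by
  set F := gluedMap hcover φ ψ
  have hFG {w : W} (h : w ∈ SG) : F w = φ ⟨w, h⟩ := gluedMap_of_mem_left hcover φ ψ h
  have hFH {w : W} (h : w ∈ SH) : F w = ψ ⟨w, h⟩ :=
    gluedMap_of_mem_right hcover hinter hw0G hw0H h0 h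
  have hcross {a b : W} (ha : a ∈ SG) (hb : b ∈ SH)
      (h : φ ⟨a, ha⟩ = ψ ⟨b, hb⟩ ∨ Y.Adj (φ ⟨a, ha⟩) (ψ ⟨b, hb⟩)) : b ∈ SG ∨ a ∈ SH := by
    have hw0 : a = w0 ∨ b = w0 := h.elim (Or.inl ∘ hmeet _ _) (hadj _ _)
    rcases hw0 with rfl | rfl
    exacts [Or.inr hw0H, Or.inl hw0G]
  have hside {a b : W} (h : F a = F b ∨ Y.Adj (F a) (F b)) :
      (a ∈ SG ∧ b ∈ SG) ∨ (a ∈ SH ∧ b ∈ SH) := by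
    rcases Set.eq_univ_iff_forall.mp hcover a with ha | ha <;>
      rcases Set.eq_univ_iff_forall.mp hcover b with hb | hb
    · exact Or.inl ⟨ha, hb⟩
    · rw [hFG ha, hFH hb] at h
      exact (hcross ha hb h).imp (⟨ha, ·⟩) (⟨·, hb⟩)
    · rw [hFH ha, hFG hb, eq_comm, Y.adj_comm] at h
      exact (hcross hb ha h).imp (⟨·, hb⟩) (⟨ha, ·⟩)
    · exact Or.inr ⟨ha, hb⟩
  have hinj : F.Injective := fun a b h => by
    rcases hside (Or.inl h) with ⟨ha, hb⟩ | ⟨ha, hb⟩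
    · rw [hFG ha, hFG hb] at h
      exact congrArg Subtype.val (φ.injective h)
    · rw [hFH ha, hFH hb] at h
      exact congrArg Subtype.val (ψ.injective h)
  have hFsurj : F.Surjective := fun z => by
    rcases hsurj z with ⟨x, rfl⟩ | ⟨y, rfl⟩
    exacts [⟨x, hFG x.2⟩, ⟨y, hFH y.2⟩]
  refine ⟨⟨Equiv.ofBijective F ⟨hinj, hFsurj⟩, fun {a b} => ?_⟩⟩
  change Y.Adj (F a) (F b) ↔ U.Adj a b
  refine ⟨fun h => ?_, fun h => ?_⟩
  · rcases hside (Or.inr h) with ⟨ha, hb⟩ | ⟨ha, hb⟩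
    · exact φ.map_adj_iff.mp (hFG ha ▸ hFG hb ▸ h)
    · exact ψ.map_adj_iff.mp (hFH ha ▸ hFH hb ▸ h)
  · rcases hedges a b h with ⟨ha, hb⟩ | ⟨ha, hb⟩
    · exact hFG ha ▸ hFG hb ▸ φ.map_adj_iff.mpr h
    · exact hFH ha ▸ hFH hb ▸ ψ.map_adj_iff.mpr h

end GluedMap

theorem union_at_external_vertex_general {W : Type}
    (U : SimpleGraph W) (SG SH : Set W) (w0 : W)
    (hw0G : w0 ∈ SG) (hw0H : w0 ∈ SH)
    (hcover : SG ∪ SH = Set.univ) (hinter : SG ∩ SH = {w0})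
    (hedges : ∀ a b : W, U.Adj a b → (a ∈ SG ∧ b ∈ SG) ∨ (a ∈ SH ∧ b ∈ SH))
    (EG : Set ↥SG) (EH : Set ↥SH)
    (hG : IsGenCoronaWithExt (U.induce SG) EG)
    (hH : IsGenCoronaWithExt (U.induce SH) EH)
    (hmemG : (⟨w0, hw0G⟩ : ↥SG) ∈ EG) (hmemH : (⟨w0, hw0H⟩ : ↥SH) ∈ EH) :
    IsGeneralCoronaOfTree U := by
  obtain ⟨n₁, T₁, P₁, hT₁, f, rfl⟩ := hG
  obtain ⟨n₂, T₂, P₂, hT₂, g, rfl⟩ := hH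
  obtain ⟨v₁, hv₁⟩ := hmemG
  obtain ⟨v₂, hv₂⟩ := hmemH
  obtain ⟨n, ι₁, ι₂, h0, hmeet, hX⟩ := exists_fin_wedge v₁ v₂
  have hf {x} (h : f x = Sum.inl v₁) : (x : W) = w0 :=
    congrArg Subtype.val (f.injective (h.trans hv₁))
  have hg {y} (h : g y = Sum.inl v₂) : (y : W) = w0 :=
    congrArg Subtype.val (g.injective (h.trans hv₂))
  refine ⟨n, _, _, isTree_sup_map hT₁ hT₂ h0 hmeet hX, nonempty_iso_of_embeddings hw0G hw0H
    hcover hinter hedges (f.toEmbedding.trans (coronaWedgeLeft P₁ P₂ hmeet))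
    (g.toEmbedding.trans (coronaWedgeRight P₁ P₂ hmeet)) ?_ ?_ ?_ ?_⟩
  · change coronaWedgeLeft P₁ P₂ hmeet (f _) = coronaWedgeRight P₁ P₂ hmeet (g _)
    rw [← hv₁, ← hv₂]
    exact congrArg Sum.inl h0
  · exact fun x y h => hf (eq_inl_of_coronaWedgeLeft_eq_right h)
  · exact fun x y h => (eq_inl_or_eq_inl_of_adj_coronaWedgeLeft_right h).imp hf hg
  · intro z
    rcases coronaWedgeLeft_or_right_surjective hX z with ⟨x, rfl⟩ | ⟨y, rfl⟩
    exacts [Or.inl ⟨f.symm x, by simp⟩, Or.inr ⟨g.symm y, by simp⟩]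

/-- If the graphs `G = U.induce SG` and `H = U.induce SH` are general coronas
of trees, they share exactly one vertex `w0` (and every edge of the union `U` lies in `G`
or in `H`), and `w0` is an external vertex of both, then the union `U = G ∪ H` is a
general corona of a tree. -/
theorem union_at_external_vertex {W : Type} [Fintype W]
    (U : SimpleGraph W) (SG SH : Set W) (w0 : W)
    (hw0G : w0 ∈ SG) (hw0H : w0 ∈ SH)
    (hcover : SG ∪ SH = Set.univ) (hinter : SG ∩ SH = {w0})
    (hedges : ∀ a b : W, U.Adj a b → (a ∈ SG ∧ b ∈ SG) ∨ (a ∈ SH ∧ b ∈ SH))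
    (EG : Set ↥SG) (EH : Set ↥SH)
    (hG : IsGenCoronaWithExt (U.induce SG) EG)
    (hH : IsGenCoronaWithExt (U.induce SH) EH)
    (hmemG : (⟨w0, hw0G⟩ : ↥SG) ∈ EG) (hmemH : (⟨w0, hw0H⟩ : ↥SH) ∈ EH) :
    IsGeneralCoronaOfTree U :=
  union_at_external_vertex_general U SG SH w0 hw0G hw0H hcover hinter hedges EG EH hG hH hmemG hmemH

end GenCorona
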